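/- arXiv:2210.09936 — 6 statements merged into one kernel-verified Lean document; each statement's English description precedes it below -/
import Mathlib

section
/- Every tournament on 2^(k-1) vertices contains a transitive subtournament on k vertices. -/
def IsTournament {V : Type*} (r : V → V → Prop) : Prop :=
  (∀ v, ¬ r v v) ∧ ∀ u v : V, u ≠ v → (r u v ↔ ¬ r v u)

def TransOn {V : Type*} (r : V → V → Prop) (S : Set V) : Prop :=
  ∀ a ∈ S, ∀ b ∈ S, ∀ c ∈ S, r a b → r b c → r a c

def Colorable {V : Type*} (r : V → V → Prop) (k : ℕ) : Prop :=
  ∃ f : V → Fin k, ∀ c : Fin k, TransOn r {v | f v = c}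

/-!
Pick any vertex `v` of a set of `2 ^ k` vertices. Among the remaining `2 ^ k - 1` vertices, either
the out-neighbours or the in-neighbours of `v` number at least `2 ^ (k - 1)`; by induction they
contain a transitive subtournament on `k` vertices, and `v` is its source or its sink, so adding
`v` keeps it transitive.
-/

open Finset

section

variable {V : Type*} {r : V → V → Prop}

lemma IsTournament.asymm (hT : IsTournament r) ⦃u v : V⦄ (huv : r u v) : ¬ r v u := by
  obtain rfl | hne := eq_or_ne u v
  · exact hT.1 u
  · exact (hT.2 u v hne).mp huv

lemma IsTournament.rel_of_not_rel (hT : IsTournament r) {u v : V} (hne : u ≠ v)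
    (hvu : ¬ r v u) : r u v :=
  (hT.2 u v hne).mpr hvu

lemma transOn_singleton (v : V) : TransOn r {v} := by
  rintro a rfl b rfl c rfl hab -
  exact hab

lemma transOn_flip {S : Set V} : TransOn (flip r) S ↔ TransOn r S :=
  ⟨fun h a ha b hb c hc hab hbc => h c hc b hb a ha hbc hab,
    fun h a ha b hb c hc hab hbc => h c hc b hb a ha hbc hab⟩

lemma TransOn.insert_of_forall_rel (hasymm : ∀ ⦃u v⦄, r u v → ¬ r v u) {S : Set V} {v : V}
    (hS : TransOn r S) (hv : ∀ u ∈ S, r v u) : TransOn r (insert v S) := by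
  rintro a (rfl | ha) b (rfl | hb) c (rfl | hc) hab hbc
  · exact hab
  · exact absurd hab (hasymm hab)
  · exact absurd hbc (hasymm hab)
  · exact hv c hc
  · exact absurd hbc (hasymm hbc)
  · exact absurd hab (hasymm (hv a ha))
  · exact absurd hbc (hasymm (hv b hb))
  · exact hS a ha b hb c hc hab hbc

lemma TransOn.insert_of_forall_rel_left (hasymm : ∀ ⦃u v⦄, r u v → ¬ r v u) {S : Set V} {v : V}
    (hS : TransOn r S) (hv : ∀ u ∈ S, r u v) : TransOn r (insert v S) :=
  transOn_flip.mp <|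
    (transOn_flip.mpr hS).insert_of_forall_rel (fun _ _ huv => hasymm huv) hv

lemma IsTournament.exists_half_out_or_in (hT : IsTournament r) (A : Finset V) (v : V) :
    ∃ B ⊆ A, v ∉ B ∧ #A ≤ 2 * #B + 1 ∧ ((∀ u ∈ B, r v u) ∨ (∀ u ∈ B, r u v)) := by
  classical
  set Out := (A.erase v).filter (r v ·)
  set In := (A.erase v).filter (¬ r v ·)
  have hcard : #A ≤ #Out + #In + 1 := by
    rw [card_filter_add_card_filter_not]
    have := pred_card_le_card_erase (s := A) (a := v)
    omega
  have hsub {p : V → Prop} [DecidablePred p] : (A.erase v).filter p ⊆ A :=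
    (filter_subset _ _).trans (erase_subset _ _)
  have hv {p : V → Prop} [DecidablePred p] : v ∉ (A.erase v).filter p :=
    fun h => notMem_erase v A (mem_of_mem_filter v h)
  by_cases hle : #In ≤ #Out
  · refine ⟨Out, hsub, hv, by omega, Or.inl fun u hu => (mem_filter.mp hu).2⟩
  · refine ⟨In, hsub, hv, by omega, Or.inr fun u hu => ?_⟩
    obtain ⟨hu, hvu⟩ := mem_filter.mp hu
    exact hT.rel_of_not_rel (ne_of_mem_erase hu) hvu

lemma IsTournament.exists_transOn_subset (hT : IsTournament r) (k : ℕ) (A : Finset V)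
    (hA : 2 ^ k ≤ #A) : ∃ S ⊆ A, #S = k + 1 ∧ TransOn r ↑S := by
  classical
  obtain ⟨v, hvA⟩ : A.Nonempty := card_pos.mp (lt_of_lt_of_le (Nat.two_pow_pos k) hA)
  induction k generalizing A v with
  | zero => exact ⟨{v}, singleton_subset_iff.mpr hvA, rfl, by simpa using transOn_singleton v⟩
  | succ k ih =>
    obtain ⟨B, hBA, hvB, hB, hdom⟩ := hT.exists_half_out_or_in A v
    have hkB : 2 ^ k ≤ #B := by rw [pow_succ] at hA; omega
    obtain ⟨w, hw⟩ : B.Nonempty := card_pos.mp (lt_of_lt_of_le (Nat.two_pow_pos k) hkB)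
    obtain ⟨S, hSB, hS, hStrans⟩ := ih B hkB w hw
    refine ⟨insert v S, insert_subset hvA (hSB.trans hBA),
      by rw [card_insert_of_notMem (fun h => hvB (hSB h)), hS], ?_⟩
    rw [coe_insert]
    rcases hdom with hout | hin
    · exact hStrans.insert_of_forall_rel hT.asymm fun u hu => hout u (hSB hu)
    · exact hStrans.insert_of_forall_rel_left hT.asymm fun u hu => hin u (hSB hu)

end

theorem stmt0_general (k : ℕ) (V : Type*) [Fintype V] (r : V → V → Prop)
    (hT : IsTournament r) (hcard : Fintype.card V = 2 ^ (k - 1)) :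
    ∃ S : Finset V, S.card = k ∧ TransOn r ↑S := by
  cases k with
  | zero => exact ⟨∅, rfl, by simp [TransOn]⟩
  | succ k =>
    obtain ⟨S, -, hS, hStrans⟩ := hT.exists_transOn_subset k univ (by simp [hcard])
    exact ⟨S, hS, hStrans⟩

theorem stmt0 (k : ℕ) (V : Type*) [Fintype V] [DecidableEq V] (r : V → V → Prop)
    (hT : IsTournament r) (hcard : Fintype.card V = 2 ^ (k - 1)) :
    ∃ S : Finset V, S.card = k ∧ TransOn r ↑S :=
  stmt0_general k V r hT hcard
end

section
/- Every tournament on 6 vertices is 2-colorable, i.e., its vertex set can be partitioned into two sets each inducing a transitive subtournament. -/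
open Finset

namespace IsTournament

variable {V : Type*} {r : V → V → Prop}

theorem asymm_s2 (hT : IsTournament r) {u v : V} (h : r u v) : ¬ r v u :=
  (hT.2 u v fun huv => hT.1 u (huv ▸ h)).1 h

protected theorem flip (hT : IsTournament r) : IsTournament (flip r) :=
  ⟨hT.1, fun u v huv => hT.2 v u huv.symm⟩

theorem transOn_pair (hT : IsTournament r) (a b : V) : TransOn r {a, b} := by
  rintro x hx y hy z hz hxy hyz
  simp only [Set.mem_insert_iff, Set.mem_singleton_iff] at hx hy hz
  rcases hx with rfl | rfl <;> rcases hy with rfl | rfl <;> rcases hz with rfl | rfl <;>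
    first | exact absurd hxy (hT.1 _) | exact absurd hyz (hT.1 _) | exact absurd hyz (hT.asymm_s2 hxy)

theorem transOn_insert (hT : IsTournament r) {S : Set V} {v : V} (hS : TransOn r S)
    (hv : ∀ s ∈ S, r v s) : TransOn r (insert v S) := by
  rintro x (rfl | hx) y (rfl | hy) z (rfl | hz) hxy hyz
  · exact absurd hxy (hT.1 _)
  · exact absurd hxy (hT.1 _)
  · exact absurd hyz (hT.asymm_s2 (hv y hy))
  · exact hv z hz
  · exact absurd hxy (hT.asymm_s2 (hv x hx))
  · exact absurd hxy (hT.asymm_s2 (hv x hx))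
  · exact absurd hyz (hT.asymm_s2 (hv y hy))
  · exact hS x hx y hy z hz hxy hyz

end IsTournament

theorem TransOn.flip {V : Type*} {r : V → V → Prop} {S : Set V} (h : TransOn r S) :
    TransOn (flip r) S :=
  fun a ha b hb c hc hab hbc => h c hc b hb a ha hbc hab

theorem colorable_two_of_transOn_compl {V : Type*} {r : V → V → Prop} {S : Set V}
    (hS : TransOn r S) (hSc : TransOn r Sᶜ) : Colorable r 2 := by
  classical
  refine ⟨fun v => if v ∈ S then 0 else 1, fun c => ?_⟩
  fin_cases c
  · simpa using hS
  · simpa [Set.compl_def] using hSc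

theorem four_le_choose_two_add_choose_two {a b : ℕ} (h : a + b = 5) :
    4 ≤ a.choose 2 + b.choose 2 := by
  obtain rfl : b = 5 - a := by omega
  have : a ≤ 5 := by omega
  interval_cases a <;> decide

section Counting

open scoped Classical

variable {V : Type*} [Fintype V] {r : V → V → Prop}

noncomputable def transTriples (r : V → V → Prop) : Finset (Finset V) :=
  {S ∈ univ.powersetCard 3 | TransOn r ↑S}

theorem mem_transTriples {S : Finset V} : S ∈ transTriples r ↔ #S = 3 ∧ TransOn r ↑S := by
  simp [transTriples]

theorem sum_choose_outdeg_le_card_transTriples (hT : IsTournament r) :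
    ∑ v, (#{u | r v u}).choose 2 ≤ #(transTriples r) := by
  simp_rw [← card_powersetCard]
  rw [← card_sigma]
  refine card_le_card_of_injOn (fun p => insert p.1 p.2) ?_ ?_
  · rintro ⟨v, P⟩ hP
    simp only [coe_sigma, Set.mem_sigma_iff, mem_coe, mem_univ, mem_powersetCard, true_and] at hP
    obtain ⟨hPv, hP2⟩ := hP
    have hvP : ∀ s ∈ P, r v s := fun s hs => by simpa using hPv hs
    have hv : v ∉ P := fun h => hT.1 v (hvP v h)
    obtain ⟨a, b, -, rfl⟩ := card_eq_two.mp hP2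
    refine mem_filter.mpr ⟨mem_powersetCard.mpr ⟨subset_univ _, ?_⟩, ?_⟩
    · rw [card_insert_of_notMem hv, hP2]
    · rw [coe_insert, coe_pair]
      exact hT.transOn_insert (hT.transOn_pair a b) (by simpa using hvP)
  · rintro ⟨v, P⟩ hP ⟨w, Q⟩ hQ (hvw : insert v P = insert w Q)
    simp only [coe_sigma, Set.mem_sigma_iff, mem_coe, mem_univ, mem_powersetCard, true_and,
      subset_iff, mem_filter] at hP hQ
    have hvP : v ∉ P := fun h => hT.1 v (hP.1 h)
    have hwQ : w ∉ Q := fun h => hT.1 w (hQ.1 h)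
    obtain rfl : v = w := by
      by_contra hne
      have hwP : w ∈ P := (mem_insert.mp (hvw ▸ mem_insert_self w Q)).resolve_left (Ne.symm hne)
      have hvQ : v ∈ Q := (mem_insert.mp (hvw ▸ mem_insert_self v P)).resolve_left hne
      exact hT.asymm_s2 (hP.1 hwP) (hQ.1 hvQ)
    rw [← erase_insert hvP, ← erase_insert hwQ, hvw]

theorem transTriples_flip : transTriples (flip r) = transTriples r := by
  ext S
  simp only [mem_transTriples]
  exact and_congr_right fun _ => ⟨TransOn.flip, TransOn.flip⟩

theorem sum_choose_outdeg_add_choose_indeg_le (hT : IsTournament r) :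
    ∑ v, ((#{u | r v u}).choose 2 + (#{u | r u v}).choose 2) ≤ 2 * #(transTriples r) := by
  have hin := sum_choose_outdeg_le_card_transTriples hT.flip
  rw [transTriples_flip] at hin
  rw [sum_add_distrib, two_mul]
  exact add_le_add (sum_choose_outdeg_le_card_transTriples hT) hin

theorem card_outdeg_add_card_indeg (hT : IsTournament r) (v : V) :
    #{u | r v u} + #{u | r u v} = Fintype.card V - 1 := by
  rw [← card_union_of_disjoint (disjoint_filter.mpr fun u _ h => hT.asymm_s2 h), ← card_univ,
    ← card_erase_of_mem (mem_univ v)]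
  congr 1
  ext u
  simp only [mem_union, mem_filter, mem_univ, true_and, mem_erase, and_true]
  refine ⟨?_, fun hu => ?_⟩
  · rintro (h | h) rfl <;> exact hT.1 u h
  · by_cases h : r v u
    · exact Or.inl h
    · exact Or.inr ((hT.2 u v hu).mpr h)

theorem exists_transOn_and_transOn_compl (hT : IsTournament r) (hV : Fintype.card V = 6) :
    ∃ S : Set V, TransOn r S ∧ TransOn r Sᶜ := by
  by_contra! h
  have hle : #(transTriples r) ≤ #(univ.powersetCard 3 \ transTriples r) := by
    refine card_le_card_of_injOn compl (fun S hS => ?_) compl_injective.injOn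
    rw [mem_coe, mem_transTriples] at hS
    rw [mem_coe, mem_sdiff, mem_powersetCard, mem_transTriples, card_compl, hV, hS.1, coe_compl]
    exact ⟨⟨subset_univ _, rfl⟩, fun hc => h _ hS.2 hc.2⟩
  have hge : 24 ≤ 2 * #(transTriples r) :=
    calc 24 = ∑ _v : V, 4 := by rw [sum_const, card_univ, hV]; rfl
      _ ≤ ∑ v, ((#{u | r v u}).choose 2 + (#{u | r u v}).choose 2) :=
        sum_le_sum fun v _ => four_le_choose_two_add_choose_two (by
          rw [card_outdeg_add_card_indeg hT, hV])
      _ ≤ 2 * #(transTriples r) := sum_choose_outdeg_add_choose_indeg_le hT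
  have hsub : transTriples r ⊆ univ.powersetCard 3 := filter_subset _ _
  rw [card_sdiff_of_subset hsub, card_powersetCard, card_univ, hV,
    show Nat.choose 6 3 = 20 from rfl] at hle
  omega

end Counting

theorem stmt2 (V : Type*) [Fintype V] (r : V → V → Prop)
    (hT : IsTournament r) (hcard : Fintype.card V = 6) :
    Colorable r 2 := by
  obtain ⟨S, hS, hSc⟩ := exists_transOn_and_transOn_compl hT hcard
  exact colorable_two_of_transOn_compl hS hSc
end

section
/- The tournament X_13, defined on ZMod 13 with an arc from i to j iff j - i ∈ {1, 2, 3, 5, 6, 9}, contains no transitive subtournament on 5 vertices. -/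
def x13 (i j : ZMod 13) : Prop :=
  j - i = 1 ∨ j - i = 2 ∨ j - i = 3 ∨ j - i = 5 ∨ j - i = 6 ∨ j - i = 9

section Tournament

variable {V : Type*} {r : V → V → Prop}

instance TransOn.decidableFinset [DecidableRel r] (S : Finset V) : Decidable (TransOn r ↑S) :=
  decidable_of_iff (∀ a ∈ S, ∀ b ∈ S, ∀ c ∈ S, r a b → r b c → r a c)
    (by simp only [TransOn, Finset.mem_coe])

theorem TransOn.mono {S T : Set V} (hT : TransOn r T) (hST : S ⊆ T) : TransOn r S :=
  fun a ha b hb c hc => hT a (hST ha) b (hST hb) c (hST hc)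

theorem TransOn.image {W : Type*} {r' : W → W → Prop} {f : V → W}
    (hf : ∀ a b, r' (f a) (f b) ↔ r a b) {S : Set V} (hS : TransOn r S) : TransOn r' (f '' S) := by
  rintro _ ⟨a, ha, rfl⟩ _ ⟨b, hb, rfl⟩ _ ⟨c, hc, rfl⟩
  simp only [hf]
  exact hS a ha b hb c hc

theorem IsTournament.exists_source [DecidableEq V] (hr : IsTournament r) {S : Finset V}
    (hS : TransOn r ↑S) (hne : S.Nonempty) : ∃ a ∈ S, ∀ b ∈ S.erase a, r a b := by
  induction S using Finset.induction_on with
  | empty => simp at hne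
  | insert x S hxS ih =>
    rcases S.eq_empty_or_nonempty with rfl | hSne
    · exact ⟨x, by simp, by simp⟩
    obtain ⟨a, haS, ha⟩ := ih (hS.mono (by simp [Set.subset_insert])) hSne
    have hxa : x ≠ a := fun h => hxS (h ▸ haS)
    by_cases hax : r a x
    · refine ⟨a, Finset.mem_insert_of_mem haS, fun b hb => ?_⟩
      obtain ⟨hba, rfl | hbS⟩ := Finset.mem_erase.1 hb |>.imp_right Finset.mem_insert.1
      · exact hax
      · exact ha b (Finset.mem_erase.2 ⟨hba, hbS⟩)
    · have hxa' : r x a := (hr.2 x a hxa).2 hax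
      refine ⟨x, Finset.mem_insert_self x S, fun b hb => ?_⟩
      obtain ⟨hbx, hbS⟩ := Finset.mem_erase.1 hb
      have hbS : b ∈ S := (Finset.mem_insert.1 hbS).resolve_left hbx
      rcases eq_or_ne b a with rfl | hba
      · exact hxa'
      · exact hS x (by simp) a (by simp [haS]) b (by simp [hbS]) hxa'
          (ha b (Finset.mem_erase.2 ⟨hba, hbS⟩))

end Tournament

instance : DecidableRel x13 := fun i j => by unfold x13; infer_instance

theorem isTournament_x13 : IsTournament x13 := by
  unfold IsTournament; decide

theorem x13_sub_sub (t i j : ZMod 13) : x13 (i - t) (j - t) ↔ x13 i j := by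
  simp only [x13, sub_sub_sub_cancel_right]

-- For `v = 1, 2, 3, 5, 6, 9` the common out-neighbourhood of `0` and `v` is `{2, 3, 6}`, `{3, 5}`,
-- `{5, 6, 9}`, `{1, 6}`, `{2, 9}`, `{1, 2, 5}`; the three-element ones are directed 3-cycles.
set_option synthInstance.maxSize 1000 in
theorem x13_not_transOn_of_commonOut_zero : ∀ v : ZMod 13, x13 0 v → ∀ x y z : ZMod 13,
    (x13 0 x ∧ x13 v x) → (x13 0 y ∧ x13 v y) → (x13 0 z ∧ x13 v z) →
    x ≠ y → x ≠ z → y ≠ z → ¬ TransOn x13 ↑({x, y, z} : Finset (ZMod 13)) := by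
  decide

theorem x13_not_transOn_of_commonOut {a v : ZMod 13} (hav : x13 a v) {U : Finset (ZMod 13)}
    (hU : U.card = 3) (hout : ∀ w ∈ U, x13 a w ∧ x13 v w) : ¬ TransOn x13 ↑U := by
  obtain ⟨x, y, z, hxy, hxz, hyz, rfl⟩ := Finset.card_eq_three.1 hU
  intro hT
  have hshift : ∀ w ∈ ({x, y, z} : Finset _), x13 0 (w - a) ∧ x13 (v - a) (w - a) := by
    intro w hw
    rw [← sub_self a, x13_sub_sub, x13_sub_sub]
    exact hout w hw
  have hT' : TransOn x13 ↑({x - a, y - a, z - a} : Finset (ZMod 13)) := by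
    simpa [Set.image_insert_eq] using hT.image (f := (· - a)) (fun i j => x13_sub_sub a i j)
  refine x13_not_transOn_of_commonOut_zero (v - a) ?_ (x - a) (y - a) (z - a)
    (hshift x (by simp)) (hshift y (by simp)) (hshift z (by simp))
    (sub_left_injective.ne hxy) (sub_left_injective.ne hxz) (sub_left_injective.ne hyz) hT'
  rwa [← sub_self a, x13_sub_sub]

theorem stmt10 : ¬ ∃ S : Finset (ZMod 13), S.card = 5 ∧ TransOn x13 ↑S := by
  rintro ⟨S, hS5, hS⟩
  obtain ⟨a, haS, ha⟩ := isTournament_x13.exists_source hS (Finset.card_pos.1 (by omega))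
  have hS4 : (S.erase a).card = 4 := by rw [Finset.card_erase_of_mem haS, hS5]
  have hTS4 : TransOn x13 ↑(S.erase a) := hS.mono (Finset.coe_subset.2 (S.erase_subset a))
  obtain ⟨v, hvS, hv⟩ := isTournament_x13.exists_source hTS4 (Finset.card_pos.1 (by omega))
  refine x13_not_transOn_of_commonOut (ha v hvS) (U := (S.erase a).erase v) ?_
    (fun w hw => ⟨ha w (Finset.mem_of_mem_erase hw), hv w hw⟩)
    (hTS4.mono (Finset.coe_subset.2 (Finset.erase_subset v _)))
  rw [Finset.card_erase_of_mem hvS, hS4]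
end

section
/- For every arc (i, j) of the tournament X_13 there exists an automorphism of X_13 mapping i to 0 and j to either 1 or 2. -/
lemma x13_iff_zero_sub (a b : ZMod 13) : x13 a b ↔ x13 0 (b - a) := by
  simp only [x13, sub_zero]

lemma x13_mul_left_iff {c : ZMod 13} (hc : c ^ 3 = 1) (a b : ZMod 13) :
    x13 (c * a) (c * b) ↔ x13 a b := by
  rw [x13_iff_zero_sub, x13_iff_zero_sub a, ← mul_sub]
  generalize b - a = d
  revert c d
  decide

lemma exists_pow_three_eq_one_mul_eq_one_or_two {d : ZMod 13} (hd : x13 0 d) :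
    ∃ c : ZMod 13, c ^ 3 = 1 ∧ (c * d = 1 ∨ c * d = 2) := by
  revert d
  decide

def x13Aut {c : ZMod 13} (hc : c ^ 3 = 1) (i : ZMod 13) : ZMod 13 ≃ ZMod 13 :=
  (Equiv.subRight i).trans (Units.mulLeft (Units.ofPowEqOne c 3 hc three_ne_zero))

@[simp]
lemma x13Aut_apply {c : ZMod 13} (hc : c ^ 3 = 1) (i x : ZMod 13) :
    x13Aut hc i x = c * (x - i) :=
  rfl

lemma x13_x13Aut_iff {c : ZMod 13} (hc : c ^ 3 = 1) (i a b : ZMod 13) :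
    x13 (x13Aut hc i a) (x13Aut hc i b) ↔ x13 a b := by
  rw [x13Aut_apply, x13Aut_apply, x13_mul_left_iff hc, x13_iff_zero_sub, sub_sub_sub_cancel_right,
    ← x13_iff_zero_sub]

theorem stmt12 (i j : ZMod 13) (h : x13 i j) :
    ∃ f : ZMod 13 ≃ ZMod 13, (∀ a b, x13 (f a) (f b) ↔ x13 a b) ∧
      f i = 0 ∧ (f j = 1 ∨ f j = 2) := by
  obtain ⟨c, hc, hcji⟩ := exists_pow_three_eq_one_mul_eq_one_or_two ((x13_iff_zero_sub i j).1 h)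
  exact ⟨x13Aut hc i, x13_x13Aut_iff hc i, by simp, by simpa using hcji⟩
end

section
/- If A is a 4-element subset of ZMod 13 inducing a transitive subtournament of X_13 whose two vertices of highest out-degree within A are {0,1} or {0,2}, then A is one of {0,1,2,3}, {0,1,3,6}, {0,1,6,2}, {0,2,3,5}. -/
theorem eq_and_eq_of_rel_of_pair_eq {α : Type*} [DecidableEq α] {r : α → α → Prop} {a b x y : α}
    (h : ({a, b} : Finset α) = {x, y}) (hab : r a b) (hyx : ¬ r y x) : a = x ∧ b = y := by
  have h' : ({a, b} : Set α) = {x, y} := by rw [← Finset.coe_pair, h, Finset.coe_pair]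
  rcases Set.pair_eq_pair_iff.mp h' with hxy | ⟨rfl, rfl⟩
  · exact hxy
  · exact absurd hab hyx

theorem x13_common_out_zero_one {c : ZMod 13} : x13 0 c → x13 1 c → c = 2 ∨ c = 3 ∨ c = 6 := by
  revert c; decide

theorem x13_common_out_zero_two {c : ZMod 13} : x13 0 c → x13 2 c → c = 3 ∨ c = 5 := by
  revert c; decide

theorem stmt13_general (A : Finset (ZMod 13))
    (a b c d : ZMod 13) (hA : A = {a, b, c, d})
    (hab : x13 a b) (hac : x13 a c) (had : x13 a d)
    (hbc : x13 b c) (hbd : x13 b d) (hcd : x13 c d)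
    (htop : ({a, b} : Finset (ZMod 13)) = {0, 1} ∨ ({a, b} : Finset (ZMod 13)) = {0, 2}) :
    A = ({0, 1, 2, 3} : Finset (ZMod 13)) ∨ A = ({0, 1, 3, 6} : Finset (ZMod 13)) ∨
    A = ({0, 1, 6, 2} : Finset (ZMod 13)) ∨ A = ({0, 2, 3, 5} : Finset (ZMod 13)) := by
  subst hA
  rcases htop with h | h
  · obtain ⟨rfl, rfl⟩ := eq_and_eq_of_rel_of_pair_eq h hab (by decide)
    rcases x13_common_out_zero_one hac hbc with rfl | rfl | rfl <;>
    rcases x13_common_out_zero_one had hbd with rfl | rfl | rfl <;>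
    first | exact absurd hcd (by decide) | simp
  · obtain ⟨rfl, rfl⟩ := eq_and_eq_of_rel_of_pair_eq h hab (by decide)
    rcases x13_common_out_zero_two hac hbc with rfl | rfl <;>
    rcases x13_common_out_zero_two had hbd with rfl | rfl <;>
    first | exact absurd hcd (by decide) | simp

theorem stmt13 (A : Finset (ZMod 13)) (hcard : A.card = 4) (htrans : TransOn x13 ↑A)
    (a b c d : ZMod 13) (hA : A = {a, b, c, d})
    (hab : x13 a b) (hac : x13 a c) (had : x13 a d)
    (hbc : x13 b c) (hbd : x13 b d) (hcd : x13 c d)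
    (htop : ({a, b} : Finset (ZMod 13)) = {0, 1} ∨ ({a, b} : Finset (ZMod 13)) = {0, 2}) :
    A = ({0, 1, 2, 3} : Finset (ZMod 13)) ∨ A = ({0, 1, 3, 6} : Finset (ZMod 13)) ∨
    A = ({0, 1, 6, 2} : Finset (ZMod 13)) ∨ A = ({0, 2, 3, 5} : Finset (ZMod 13)) :=
  stmt13_general A a b c d hA hab hac had hbc hbd hcd htop
end

section
/- The tournament T_1 obtained from X_13 by removing the vertices {0,1,2,3} has no non-trivial automorphism. -/
def T1verts : Set (ZMod 13) := {4, 5, 6, 7, 8, 9, 10, 11, 12}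

/-!
Out-degrees split the nine vertices into the blocks {4,5,6}, {7,8,9}, {10,11,12} of out-degree
5, 4, 3, and each block induces a transitive triangle. So the out-degree of a vertex together with
its out-degree inside its own block separates all vertices; both numbers are preserved by every
automorphism, which therefore fixes each vertex.
-/

open Finset Function

section DegreeSignature

variable {V : Type*} [Fintype V] (r : V → V → Prop) [DecidableRel r]

def outDegreeIn (p : V → Prop) [DecidablePred p] (v : V) : ℕ := #{w | r v w ∧ p w}

def outDegree (v : V) : ℕ := outDegreeIn r (fun _ => True) v

def degreeSignature (v : V) : ℕ × ℕ :=
  (outDegree r v, outDegreeIn r (fun w => outDegree r w = outDegree r v) v)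

variable {r} {f : V ≃ V}

lemma outDegreeIn_apply_equiv (hf : ∀ i j, r (f i) (f j) ↔ r i j) {p : V → Prop}
    [DecidablePred p] (hp : ∀ w, p (f w) ↔ p w) (v : V) :
    outDegreeIn r p (f v) = outDegreeIn r p v :=
  card_equiv f.symm fun w => by
    rw [mem_filter, mem_filter, ← hf v, ← hp (f.symm w), f.apply_symm_apply]
    simp only [mem_univ, true_and]

lemma outDegree_apply_equiv (hf : ∀ i j, r (f i) (f j) ↔ r i j) (v : V) :
    outDegree r (f v) = outDegree r v :=
  outDegreeIn_apply_equiv hf (fun _ => Iff.rfl) v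

lemma degreeSignature_apply_equiv (hf : ∀ i j, r (f i) (f j) ↔ r i j) (v : V) :
    degreeSignature r (f v) = degreeSignature r v := by
  have hdeg := outDegree_apply_equiv hf
  simp only [degreeSignature, hdeg]
  exact congrArg _ (outDegreeIn_apply_equiv hf (fun w => by rw [hdeg]) v)

lemma eq_refl_of_injective_degreeSignature (hinj : Injective (degreeSignature r))
    (hf : ∀ i j, r (f i) (f j) ↔ r i j) : f = Equiv.refl V :=
  Equiv.ext fun v => hinj (degreeSignature_apply_equiv hf v)

end DegreeSignature

instance inst_s14 : DecidableRel x13 := fun i j => by unfold x13; infer_instance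

instance : DecidablePred (· ∈ T1verts) := fun v =>
  inferInstanceAs (Decidable (v ∈ ({4, 5, 6, 7, 8, 9, 10, 11, 12} : Set (ZMod 13))))

lemma injective_degreeSignature_T1 :
    Injective (degreeSignature fun i j : T1verts => x13 i j) := by
  decide

theorem stmt14 (f : T1verts ≃ T1verts)
    (hf : ∀ i j : T1verts, x13 (f i : ZMod 13) (f j : ZMod 13) ↔ x13 (i : ZMod 13) (j : ZMod 13)) :
    f = Equiv.refl T1verts :=
  eq_refl_of_injective_degreeSignature injective_degreeSignature_T1 hf
end
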